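/- Let f : ℝ → [0,∞) be a probability density such that log f : ℝ → [−∞,∞) is concave (i.e. f is log-concave). Let T = {T_n} be a sequence of measurable maps T_n : ℝ^n → ℝ such that for every n, every x ∈ ℝ^n and every θ' ∈ ℝ, ∏_{i=1}^n f(x_i − T_n(x)) ≥ ∏_{i=1}^n f(x_i − θ') (i.e. T_n is a maximum likelihood estimator). Then for every θ ∈ ℝ and ε > 0: β^+(T,θ,ε) ≥ sup_{0<s<1} I^s(p_θ‖p_{θ+ε}) and β^−(T,θ,ε) ≥ sup_{0<s<1} I^s(p_{θ−ε}‖p_θ). -/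

import Mathlib

/-!
On the event `{T_n > θ + ε}` the likelihood `L(c) = ∏ f (x_i - c)` is at least as large at the
maximum likelihood estimate as at `θ`; being log-concave in `c`, it is then at least as large
at every point in between, in particular at `θ + ε`. Hence the event lies inside
`{L(θ) ≤ L(θ + ε)}`, whose `p_θ^n`-probability is at most `(∫ p_θ^s p_{θ+ε}^(1-s))^n` by the
Chernoff bound `𝟙{a ≤ b} a ≤ a^s b^(1-s)` and Fubini. Taking `-(1/n) log` gives `I^s`. The
lower tail is the mirror image, using `I^s(p‖q) = I^(1-s)(q‖p)`.
-/

open MeasureTheory Filter Set Topology ENNReal NNReal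

/-- `-log x`, with the convention `-log 0 = ∞`, as a map `ℝ≥0∞ → ℝ≥0∞`. -/
noncomputable def negLog (x : ℝ≥0∞) : ℝ≥0∞ :=
  if x = 0 then ⊤ else ENNReal.ofReal (-Real.log x.toReal)

/-- The `n`-fold product (i.i.d.) measure of `p`. -/
noncomputable def prodMeas {Ω : Type*} [MeasurableSpace Ω] (p : Measure Ω) (n : ℕ) :
    Measure (Fin n → Ω) :=
  Measure.pi fun _ => p

/-- `β⁺(T,θ,ε) = liminf (-1/n) log p_θ^n { T_n > θ + ε }`. -/
noncomputable def betaPlus {Ω : Type*} [MeasurableSpace Ω] (p : ℝ → Measure Ω)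
    (T : (n : ℕ) → (Fin n → Ω) → ℝ) (θ ε : ℝ) : ℝ≥0∞ :=
  Filter.atTop.liminf fun n : ℕ =>
    negLog (prodMeas (p θ) n {x | θ + ε < T n x}) / (n : ℝ≥0∞)

/-- `β⁻(T,θ,ε) = liminf (-1/n) log p_θ^n { T_n < θ - ε }`. -/
noncomputable def betaMinus {Ω : Type*} [MeasurableSpace Ω] (p : ℝ → Measure Ω)
    (T : (n : ℕ) → (Fin n → Ω) → ℝ) (θ ε : ℝ) : ℝ≥0∞ :=
  Filter.atTop.liminf fun n : ℕ =>
    negLog (prodMeas (p θ) n {x | T n x < θ - ε}) / (n : ℝ≥0∞)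

/-- The location shift family: `p_θ` has density `x ↦ f (x - θ)` w.r.t. Lebesgue measure. -/
noncomputable def locMeasure (f : ℝ → ℝ) (θ : ℝ) : Measure ℝ :=
  volume.withDensity fun x => ENNReal.ofReal (f (x - θ))

/-- The relative Rényi entropy `I^s(p‖q) = -log ∫ p^s q^(1-s) dμ` of two densities
`p, q` with respect to `μ`. -/
noncomputable def renyi {Ω : Type*} [MeasurableSpace Ω] (μ : Measure Ω)
    (p q : Ω → ℝ≥0∞) (s : ℝ) : ℝ≥0∞ :=
  negLog (∫⁻ ω, p ω ^ s * q ω ^ (1 - s) ∂μ)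

theorem negLog_antitone : Antitone negLog := by
  intro x y hxy
  unfold negLog
  rcases eq_or_ne x 0 with rfl | hx
  · simp
  have hy : y ≠ 0 := (pos_of_ne_zero hx |>.trans_le hxy).ne'
  rw [if_neg hx, if_neg hy]
  rcases eq_or_ne y ⊤ with rfl | hy_top
  · simp
  have hx_pos : 0 < x.toReal := ENNReal.toReal_pos hx (ne_top_of_le_ne_top hy_top hxy)
  exact ENNReal.ofReal_le_ofReal <| neg_le_neg <|
    Real.log_le_log hx_pos (ENNReal.toReal_mono hy_top hxy)

theorem negLog_pow (J : ℝ≥0∞) (n : ℕ) : negLog (J ^ n) = n * negLog J := by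
  rcases eq_or_ne J 0 with rfl | hJ
  · rcases eq_or_ne n 0 with rfl | hn
    · simp [negLog]
    · simp [negLog, zero_pow hn, hn]
  unfold negLog
  rw [if_neg (pow_ne_zero n hJ), if_neg hJ, ENNReal.toReal_pow, Real.log_pow, ← mul_neg,
    ENNReal.ofReal_mul n.cast_nonneg, ENNReal.ofReal_natCast]

theorem negLog_le_liminf_negLog_div {J : ℝ≥0∞} {P : ℕ → ℝ≥0∞} (hP : ∀ n, P n ≤ J ^ n) :
    negLog J ≤ atTop.liminf fun n : ℕ => negLog (P n) / n := by
  refine le_liminf_of_le (by isBoundedDefault) (eventually_atTop.2 ⟨1, fun n hn => ?_⟩)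
  have hn0 : (n : ℝ≥0∞) ≠ 0 := by exact_mod_cast (Nat.one_le_iff_ne_zero.mp hn)
  calc negLog J = negLog (J ^ n) / n := by
        rw [negLog_pow, mul_comm, ENNReal.mul_div_cancel_right hn0 (ENNReal.natCast_ne_top n)]
    _ ≤ negLog (P n) / n := by gcongr; exact negLog_antitone (hP n)

theorem renyi_symm {Ω : Type*} [MeasurableSpace Ω] (μ : Measure Ω) (p q : Ω → ℝ≥0∞) (s : ℝ) :
    renyi μ p q s = renyi μ q p (1 - s) := by
  unfold renyi
  congr 1
  exact lintegral_congr fun ω => by rw [mul_comm, _root_.sub_sub_cancel]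

theorem ENNReal.le_rpow_mul_rpow_of_le {a b : ℝ≥0∞} (hab : a ≤ b) {r : ℝ} (hr0 : 0 ≤ r)
    (hr1 : r ≤ 1) : a ≤ a ^ r * b ^ (1 - r) :=
  calc a = a ^ (r + (1 - r)) := by rw [add_sub_cancel, ENNReal.rpow_one]
    _ = a ^ r * a ^ (1 - r) := ENNReal.rpow_add_of_nonneg _ _ hr0 (sub_nonneg.2 hr1)
    _ ≤ a ^ r * b ^ (1 - r) := by gcongr

theorem MeasureTheory.lintegral_fin_nat_prod_eq_prod {n : ℕ} {E : Type*} [MeasurableSpace E]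
    {μ : Fin n → Measure E} [∀ i, SigmaFinite (μ i)] {f : Fin n → E → ℝ≥0∞}
    (hf : ∀ i, Measurable (f i)) :
    ∫⁻ x : Fin n → E, ∏ i, f i (x i) ∂(Measure.pi μ) = ∏ i, ∫⁻ x, f i x ∂(μ i) := by
  induction n with
  | zero => simp
  | succ n ih =>
    set F : E × (Fin n → E) → ℝ≥0∞ := fun x => f 0 x.1 * ∏ i : Fin n, f i.succ (x.2 i)
    calc
      _ = ∫⁻ x, F (MeasurableEquiv.piFinSuccAbove (fun _ => E) 0 x) ∂(Measure.pi μ) := by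
        simp only [F, MeasurableEquiv.piFinSuccAbove_apply, Fin.prod_univ_succ]
        rfl
      _ = ∫⁻ x, F x ∂((μ 0).prod (Measure.pi fun i ↦ μ i.succ)) :=
        (measurePreserving_piFinSuccAbove μ 0).lintegral_comp_emb
          (MeasurableEquiv.measurableEmbedding _) F
      _ = (∫⁻ x, f 0 x ∂μ 0) * ∏ i : Fin n, ∫⁻ x, f i.succ x ∂(μ i.succ) := by
        rw [← ih fun i => hf i.succ]
        exact lintegral_prod_mul (hf 0).aemeasurable
          (Finset.measurable_prod _ fun (i : Fin n) _ =>
            (hf i.succ).comp (measurable_pi_apply i)).aemeasurable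
      _ = ∏ i, ∫⁻ x, f i x ∂(μ i) := (Fin.prod_univ_succ (fun i => ∫⁻ x, f i x ∂(μ i))).symm

theorem MeasureTheory.Measure.pi_withDensity {n : ℕ} {E : Type*} [MeasurableSpace E]
    {μ : Fin n → Measure E} [∀ i, SigmaFinite (μ i)] {g : Fin n → E → ℝ≥0∞}
    [∀ i, SigmaFinite ((μ i).withDensity (g i))] (hg : ∀ i, Measurable (g i)) :
    Measure.pi (fun i => (μ i).withDensity (g i))
      = (Measure.pi μ).withDensity fun x => ∏ i, g i (x i) := by
  refine Measure.pi_eq fun s hs => ?_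
  rw [withDensity_apply _ (MeasurableSet.univ_pi hs), Measure.restrict_pi_pi,
    lintegral_fin_nat_prod_eq_prod hg]
  exact Finset.prod_congr rfl fun i _ => (withDensity_apply _ (hs i)).symm

theorem pi_withDensity_setOf_prod_le_prod_le_pow {Ω : Type*} [MeasurableSpace Ω]
    {μ : Measure Ω} [SigmaFinite μ] {p q : Ω → ℝ≥0∞} [SigmaFinite (μ.withDensity p)]
    (hp : Measurable p) (hq : Measurable q) {r : ℝ} (hr0 : 0 ≤ r) (hr1 : r ≤ 1) (n : ℕ) :
    Measure.pi (fun _ : Fin n => μ.withDensity p) {x | ∏ i, p (x i) ≤ ∏ i, q (x i)}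
      ≤ (∫⁻ ω, p ω ^ r * q ω ^ (1 - r) ∂μ) ^ n := by
  set ν := Measure.pi fun _ : Fin n => μ
  have hprod : ∀ h : Ω → ℝ≥0∞, Measurable h → Measurable fun x : Fin n → Ω => ∏ i, h (x i) :=
    fun h hh => Finset.measurable_prod _ fun i _ => hh.comp (measurable_pi_apply i)
  have hS : MeasurableSet {x : Fin n → Ω | ∏ i, p (x i) ≤ ∏ i, q (x i)} :=
    measurableSet_le (hprod p hp) (hprod q hq)
  rw [Measure.pi_withDensity fun _ => hp, withDensity_apply _ hS]
  calc ∫⁻ x in {x | ∏ i, p (x i) ≤ ∏ i, q (x i)}, ∏ i, p (x i) ∂ν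
      ≤ ∫⁻ x, (∏ i, p (x i)) ^ r * (∏ i, q (x i)) ^ (1 - r) ∂ν :=
        (setLIntegral_mono' hS fun x hx => ENNReal.le_rpow_mul_rpow_of_le hx hr0 hr1).trans
          (setLIntegral_le_lintegral _ _)
    _ = ∫⁻ x, ∏ i, p (x i) ^ r * q (x i) ^ (1 - r) ∂ν := by
        simp only [Finset.prod_mul_distrib, ENNReal.prod_rpow_of_nonneg hr0,
          ENNReal.prod_rpow_of_nonneg (sub_nonneg.2 hr1)]
    _ = (∫⁻ ω, p ω ^ r * q ω ^ (1 - r) ∂μ) ^ n := by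
        rw [lintegral_fin_nat_prod_eq_prod (f := fun _ ω => p ω ^ r * q ω ^ (1 - r))
            fun _ => (hp.pow_const r).mul (hq.pow_const _),
          Finset.prod_const, Finset.card_univ, Fintype.card_fin]

/-- Concavity of `log g`, written multiplicatively so that `g` may vanish. -/
def LogConcave {E : Type*} [AddCommGroup E] [Module ℝ E] (g : E → ℝ) : Prop :=
  ∀ x y : E, ∀ t ∈ Icc (0 : ℝ) 1, g x ^ t * g y ^ (1 - t) ≤ g (t • x + (1 - t) • y)

namespace LogConcave

variable {E : Type*} [AddCommGroup E] [Module ℝ E]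

theorem comp_const_sub {g : E → ℝ} (hg : LogConcave g) (x : E) :
    LogConcave fun θ => g (x - θ) := by
  intro a b t ht
  convert hg (x - a) (x - b) t ht using 2
  module

theorem finset_prod {ι : Type*} (s : Finset ι) {g : ι → E → ℝ} (hg0 : ∀ i x, 0 ≤ g i x)
    (hg : ∀ i ∈ s, LogConcave (g i)) : LogConcave fun x => ∏ i ∈ s, g i x := by
  intro x y t ht
  rw [← Real.finsetProd_rpow _ _ (fun i _ => hg0 i x), ← Real.finsetProd_rpow _ _
    (fun i _ => hg0 i y), ← Finset.prod_mul_distrib]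
  exact Finset.prod_le_prod
    (fun i _ => mul_nonneg (Real.rpow_nonneg (hg0 i x) _) (Real.rpow_nonneg (hg0 i y) _))
    fun i hi => hg i hi x y t ht

theorem le_of_mem_segment {g : E → ℝ} (hg : LogConcave g) {x y z : E} (hx : 0 ≤ g x)
    (hxy : g x ≤ g y) (hz : z ∈ segment ℝ x y) : g x ≤ g z := by
  obtain ⟨a, b, ha, hb, hab, rfl⟩ := hz
  obtain rfl : b = 1 - a := by linarith
  calc g x = g x ^ (a + (1 - a)) := by rw [add_sub_cancel, Real.rpow_one]
    _ = g x ^ a * g x ^ (1 - a) := Real.rpow_add_of_nonneg hx ha hb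
    _ ≤ g x ^ a * g y ^ (1 - a) := by gcongr
    _ ≤ g (a • x + (1 - a) • y) := hg x y a ⟨ha, by linarith⟩

end LogConcave

theorem prodMeas_locMeasure_le_pow {f : ℝ → ℝ} (hf_meas : Measurable f)
    (hf_nonneg : ∀ x, 0 ≤ f x) (hf : LogConcave f) {n : ℕ} {T : (Fin n → ℝ) → ℝ}
    (hT : ∀ x θ', ∏ i, f (x i - θ') ≤ ∏ i, f (x i - T x)) {θ b : ℝ} {A : Set (Fin n → ℝ)}
    (hA : ∀ x ∈ A, b ∈ segment ℝ θ (T x)) {r : ℝ} (hr0 : 0 ≤ r) (hr1 : r ≤ 1) :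
    prodMeas (locMeasure f θ) n A
      ≤ (∫⁻ y, ENNReal.ofReal (f (y - θ)) ^ r * ENNReal.ofReal (f (y - b)) ^ (1 - r)) ^ n := by
  have hdens : ∀ c, Measurable fun y => ENNReal.ofReal (f (y - c)) := fun c =>
    (hf_meas.comp (measurable_id.sub_const c)).ennreal_ofReal
  refine (measure_mono fun x hx => ?_).trans
    (pi_withDensity_setOf_prod_le_prod_le_pow (hdens θ) (hdens b) hr0 hr1 n)
  have hlik : LogConcave fun c => ∏ i, f (x i - c) :=
    .finset_prod _ (fun _ _ => hf_nonneg _) fun i _ => hf.comp_const_sub (x i)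
  simp only [← ENNReal.ofReal_prod_of_nonneg fun i _ => hf_nonneg _]
  exact ENNReal.ofReal_le_ofReal (hlik.le_of_mem_segment
    (Finset.prod_nonneg fun i _ => hf_nonneg _) (hT x θ) (hA x hx))

theorem renyi_le_liminf_negLog_prodMeas {f : ℝ → ℝ} (hf_meas : Measurable f)
    (hf_nonneg : ∀ x, 0 ≤ f x) (hf : LogConcave f) {T : (n : ℕ) → (Fin n → ℝ) → ℝ}
    (hT : ∀ n x θ', ∏ i, f (x i - θ') ≤ ∏ i, f (x i - T n x)) {θ b : ℝ}
    {A : (n : ℕ) → Set (Fin n → ℝ)} (hA : ∀ n, ∀ x ∈ A n, b ∈ segment ℝ θ (T n x)) {s : ℝ}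
    (hs : s ∈ Icc (0 : ℝ) 1) :
    renyi volume (fun y => ENNReal.ofReal (f (y - θ))) (fun y => ENNReal.ofReal (f (y - b))) s
      ≤ atTop.liminf fun n : ℕ => negLog (prodMeas (locMeasure f θ) n (A n)) / n :=
  negLog_le_liminf_negLog_div fun n =>
    prodMeas_locMeasure_le_pow hf_meas hf_nonneg hf (hT n) (hA n) hs.1 hs.2

theorem stmt16_general (f : ℝ → ℝ) (hf_meas : Measurable f) (hf_nonneg : ∀ x, 0 ≤ f x)
    (hf_logconcave : ∀ x y : ℝ, ∀ t ∈ Icc (0 : ℝ) 1,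
      f x ^ t * f y ^ (1 - t) ≤ f (t * x + (1 - t) * y))
    (T : (n : ℕ) → (Fin n → ℝ) → ℝ)
    (hT_mle : ∀ (n : ℕ) (x : Fin n → ℝ) (θ' : ℝ),
      ∏ i, f (x i - θ') ≤ ∏ i, f (x i - T n x))
    (θ ε : ℝ) (hε : 0 < ε) :
    (⨆ s ∈ Ioo (0 : ℝ) 1,
        renyi volume (fun x => ENNReal.ofReal (f (x - θ)))
          (fun x => ENNReal.ofReal (f (x - (θ + ε)))) s)
      ≤ betaPlus (locMeasure f) T θ ε ∧
    (⨆ s ∈ Ioo (0 : ℝ) 1,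
        renyi volume (fun x => ENNReal.ofReal (f (x - (θ - ε))))
          (fun x => ENNReal.ofReal (f (x - θ))) s)
      ≤ betaMinus (locMeasure f) T θ ε := by
  have hf : LogConcave f := hf_logconcave
  constructor
  · refine iSup₂_le fun s hs => renyi_le_liminf_negLog_prodMeas hf_meas hf_nonneg hf hT_mle
      (fun n x hx => ?_) (Ioo_subset_Icc_self hs)
    rw [segment_eq_Icc (by linarith [hx.out])]
    exact ⟨by linarith, hx.out.le⟩
  · refine iSup₂_le fun s hs => ?_
    rw [renyi_symm]
    refine renyi_le_liminf_negLog_prodMeas hf_meas hf_nonneg hf hT_mle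
      (fun n x hx => ?_) ⟨by linarith [hs.2], by linarith [hs.1]⟩
    rw [segment_symm, segment_eq_Icc (by linarith [hx.out])]
    exact ⟨hx.out.le, by linarith⟩

/-- Inequalities (4-5-3) and (4-5-4) of Lemma l10 of the paper: for a log-concave density
`f` and any maximum likelihood estimator sequence `T`, one has
`β⁺(T,θ,ε) ≥ sup_{0<s<1} I^s(p_θ‖p_{θ+ε})` and
`β⁻(T,θ,ε) ≥ sup_{0<s<1} I^s(p_{θ-ε}‖p_θ)`. -/
theorem stmt16 (f : ℝ → ℝ) (hf_meas : Measurable f) (hf_nonneg : ∀ x, 0 ≤ f x)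
    (hf_int : ∫ x, f x = 1)
    (hf_logconcave : ∀ x y : ℝ, ∀ t ∈ Icc (0 : ℝ) 1,
      f x ^ t * f y ^ (1 - t) ≤ f (t * x + (1 - t) * y))
    (T : (n : ℕ) → (Fin n → ℝ) → ℝ) (hT_meas : ∀ n, Measurable (T n))
    (hT_mle : ∀ (n : ℕ) (x : Fin n → ℝ) (θ' : ℝ),
      ∏ i, f (x i - θ') ≤ ∏ i, f (x i - T n x))
    (θ ε : ℝ) (hε : 0 < ε) :
    (⨆ s ∈ Ioo (0 : ℝ) 1,
        renyi volume (fun x => ENNReal.ofReal (f (x - θ)))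
          (fun x => ENNReal.ofReal (f (x - (θ + ε)))) s)
      ≤ betaPlus (locMeasure f) T θ ε ∧
    (⨆ s ∈ Ioo (0 : ℝ) 1,
        renyi volume (fun x => ENNReal.ofReal (f (x - (θ - ε))))
          (fun x => ENNReal.ofReal (f (x - θ))) s)
      ≤ betaMinus (locMeasure f) T θ ε :=
  stmt16_general f hf_meas hf_nonneg hf_logconcave T hT_mle θ ε hε
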